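/- arXiv:2201.10364 — 6 statements merged into one kernel-verified Lean document; each statement's English description precedes it below -/
import Mathlib

section
/- Let x_0, …, x_d ∈ ℝ^d and a_0,…,a_d > 0 with Σ_{i=0}^{d} a_i x_i = 0, and suppose for each i the family {x_j : j ≠ i} is a basis of ℝ^d. Let g_0,…,g_d ∈ ℝ^d be arbitrary vectors and for each i let v_i ∈ ℝ^d be the unique point satisfying v_i · x_j = g_j · x_j for all j ≠ i. Then for all i ≠ j the identity (v_j − v_i) · x_i = (a_j / a_i) · ((v_i − v_j) · x_j) holds. -/
/-! The vertices `v i` and `v j` satisfy the same equations `v · x k = g k · x k` for every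
`k ∉ {i, j}`, so `v j - v i` is orthogonal to all those `x k`. Pairing `v j - v i` with the
affine dependence `∑ a k • x k = 0` then leaves only the two terms `k = i` and `k = j`. -/

open InnerProductSpace

variable {ι E : Type*} [Fintype ι] [NormedAddCommGroup E] [InnerProductSpace ℝ E]

theorem inner_dependence_eq_zero_of_orthogonal_off_pair {x : ι → E} {a : ι → ℝ}
    (hsum : ∑ k, a k • x k = 0) {w : E} {i j : ι} (hij : i ≠ j)
    (hw : ∀ k, k ≠ i ∧ k ≠ j → ⟪w, x k⟫_ℝ = 0) :
    a i * ⟪w, x i⟫_ℝ + a j * ⟪w, x j⟫_ℝ = 0 := by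
  have hpair : ∑ k, a k * ⟪w, x k⟫_ℝ = a i * ⟪w, x i⟫_ℝ + a j * ⟪w, x j⟫_ℝ :=
    Fintype.sum_eq_add i j hij fun k hk => by rw [hw k hk, mul_zero]
  rw [← hpair]
  simpa only [inner_sum, real_inner_smul_right, inner_zero_right] using congrArg (⟪w, ·⟫_ℝ) hsum

theorem statement1_general (d : ℕ)
    (x : Fin (d + 1) → EuclideanSpace ℝ (Fin d))
    (a : Fin (d + 1) → ℝ) (ha : ∀ i, 0 < a i)
    (hsum : ∑ i, a i • x i = 0)
    (g : Fin (d + 1) → EuclideanSpace ℝ (Fin d))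
    (v : Fin (d + 1) → EuclideanSpace ℝ (Fin d))
    (hv : ∀ i j, j ≠ i → (inner ℝ (v i) (x j) : ℝ) = inner ℝ (g j) (x j)) :
    ∀ i j, i ≠ j →
      (inner ℝ (v j - v i) (x i) : ℝ) = (a j / a i) * (inner ℝ (v i - v j) (x j) : ℝ) := by
  intro i j hij
  have hpair := inner_dependence_eq_zero_of_orthogonal_off_pair hsum (w := v j - v i) hij
    fun k ⟨hki, hkj⟩ => by rw [inner_sub_left, hv j k hkj, hv i k hki, sub_self]
  have hswap : ⟪v i - v j, x j⟫_ℝ = -⟪v j - v i, x j⟫_ℝ := by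
    rw [← inner_neg_left, neg_sub]
  rw [hswap, div_mul_eq_mul_div, eq_div_iff (ha i).ne']
  linarith

/-- Given points `x 0, …, x d` in `ℝ^d`, positive coefficients `a i`
with `∑ i, a i • x i = 0` such that each subfamily `{x j : j ≠ i}` is a basis of
`ℝ^d`, arbitrary vectors `g i`, and vertices `v i` solving `v i · x j = g j · x j`
for all `j ≠ i`, one has `(v j - v i) · x i = (a j / a i) * ((v i - v j) · x j)`
for all `i ≠ j`. -/
theorem statement1 (d : ℕ)
    (x : Fin (d + 1) → EuclideanSpace ℝ (Fin d))
    (a : Fin (d + 1) → ℝ) (ha : ∀ i, 0 < a i)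
    (hsum : ∑ i, a i • x i = 0)
    (hbasis : ∀ i : Fin (d + 1),
      LinearIndependent ℝ (fun j : {j : Fin (d + 1) // j ≠ i} => x (j : Fin (d + 1))) ∧
      Submodule.span ℝ (x '' {j | j ≠ i}) = ⊤)
    (g : Fin (d + 1) → EuclideanSpace ℝ (Fin d))
    (v : Fin (d + 1) → EuclideanSpace ℝ (Fin d))
    (hv : ∀ i j, j ≠ i → (inner ℝ (v i) (x j) : ℝ) = inner ℝ (g j) (x j)) :
    ∀ i j, i ≠ j →
      (inner ℝ (v j - v i) (x i) : ℝ) = (a j / a i) * (inner ℝ (v i - v j) (x j) : ℝ) :=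
  statement1_general d x a ha hsum g v hv
end

section
/- Let f*: ℝ^d → ℝ be a differentiable convex function and x_0, …, x_d ∈ ℝ^d be d+1 points such that the origin 0 lies in the interior of conv{x_0,…,x_d}. For each i let v_i be the unique point satisfying v_i · x_j = ∇f*(x_j) · x_j for all j ≠ i. Then every vertex satisfies v_i · x_i ≤ ∇f*(x_i) · x_i; in particular v_i belongs to the set of feasible gradients A = {v ∈ ℝ^d : v · x_k ≤ ∇f*(x_k) · x_k for all k = 0,…,d}. -/
/-!
Since `0` is interior to the hull, for each `k` there are weights `λ ≥ 0` with `λ k > 0`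
and `∑ λ j • x j = 0`. The gradient of a convex function is monotone, so
`⟪∇f 0, x j⟫ ≤ ⟪∇f (x j), x j⟫`; pairing `∑ λ j • x j = 0` with `v k - ∇f 0` then gives
`λ k * (⟪v k, x k⟫ - ⟪∇f (x k), x k⟫) ≤ 0`.
-/

open Set Topology

theorem ConvexOn.inner_gradient_le_inner_gradient {E : Type*} [NormedAddCommGroup E]
    [InnerProductSpace ℝ E] [CompleteSpace E] {f : E → ℝ} (hf : ConvexOn ℝ univ f)
    (hdf : Differentiable ℝ f) (x y : E) :
    inner ℝ (gradient f x) (y - x) ≤ inner ℝ (gradient f y) (y - x) := by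
  let φ : ℝ →ᵃ[ℝ] E := AffineMap.lineMap x y
  have hderiv (t : ℝ) :
      HasDerivAt (f ∘ φ) (inner ℝ (gradient f (φ t)) (y - x)) t := by
    simpa using (hdf (φ t)).hasGradientAt.hasFDerivAt.comp_hasDerivAt t
      (AffineMap.hasDerivAt_lineMap (a := x) (b := y))
  have hconvex : ConvexOn ℝ univ (f ∘ φ) := by
    simpa using hf.comp_affineMap φ
  have hmono := hconvex.monotoneOn_deriv fun t _ => (hderiv t).differentiableAt
  have h01 := hmono (mem_univ 0) (mem_univ 1) zero_le_one
  rwa [(hderiv 0).deriv, (hderiv 1).deriv, AffineMap.lineMap_apply_zero,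
    AffineMap.lineMap_apply_one] at h01

section

variable {E ι : Type*} [AddCommGroup E] [Module ℝ E] [Fintype ι]

theorem convexHull_range_eq_image_stdSimplex (x : ι → E) :
    convexHull ℝ (range x) = Fintype.linearCombination ℝ x '' stdSimplex ℝ ι := by
  classical
  rw [← convexHull_rangle_single_eq_stdSimplex, LinearMap.image_convexHull, ← range_comp]
  congr 2
  ext j
  simp [Fintype.linearCombination_apply_single]

theorem exists_nonneg_sum_smul_eq_zero_of_zero_mem_interior_convexHull [TopologicalSpace E]
    [IsTopologicalAddGroup E] [ContinuousSMul ℝ E] {x : ι → E}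
    (hx : (0 : E) ∈ interior (convexHull ℝ (range x))) (i : ι) :
    ∃ w : ι → ℝ, (∀ j, 0 ≤ w j) ∧ 0 < w i ∧ ∑ j, w j • x j = 0 := by
  classical
  obtain ⟨ε, hεx, hε⟩ : ∃ ε : ℝ, -ε • x i ∈ convexHull ℝ (range x) ∧ 0 < ε := by
    have hnear : ∀ᶠ t in 𝓝 (0 : ℝ), -t • x i ∈ convexHull ℝ (range x) :=
      (Continuous.tendsto' (by fun_prop) 0 0 (by simp)).eventually
        (mem_interior_iff_mem_nhds.mp hx)
    exact ((hnear.filter_mono nhdsWithin_le_nhds).and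
      (self_mem_nhdsWithin (s := Ioi 0))).exists
  rw [convexHull_range_eq_image_stdSimplex] at hεx
  obtain ⟨μ, ⟨hμ, -⟩, hμx⟩ := hεx
  refine ⟨μ + ε • Pi.single i 1, fun j => ?_, ?_, ?_⟩
  · have : 0 ≤ (Pi.single i 1 : ι → ℝ) j := by
      rcases eq_or_ne j i with rfl | h <;> simp [*]
    exact add_nonneg (hμ j) (mul_nonneg hε.le this)
  · simpa using add_pos_of_nonneg_of_pos (hμ i) hε
  · rw [← Fintype.linearCombination_apply, map_add, map_smul, hμx,
      Fintype.linearCombination_apply_single]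
    simp

end

theorem inner_le_of_sum_smul_eq_zero {E ι : Type*} [NormedAddCommGroup E]
    [InnerProductSpace ℝ E] [Fintype ι] {x : ι → E} {w : ι → ℝ} (hw : ∀ j, 0 ≤ w j)
    (hwx : ∑ j, w j • x j = 0)
    {k : ι} (hk : 0 < w k) {b : ι → ℝ} {g u : E} (hg : ∀ j, inner ℝ g (x j) ≤ b j)
    (hu : ∀ j ≠ k, inner ℝ u (x j) = b j) :
    inner ℝ u (x k) ≤ b k := by
  have hsum : w k * (inner ℝ u (x k) - b k) ≤ 0 :=
    calc w k * (inner ℝ u (x k) - b k) = ∑ j, w j * (inner ℝ u (x j) - b j) := by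
          rw [Finset.sum_eq_single k (fun j _ hj => by simp [hu j hj]) (by simp)]
      _ ≤ ∑ j, w j * inner ℝ (u - g) (x j) := by
          gcongr with j
          · exact hw j
          · rw [inner_sub_left]; linarith [hg j]
      _ = inner ℝ (u - g) (∑ j, w j • x j) := by simp [inner_sum, inner_smul_right]
      _ = 0 := by rw [hwx, inner_zero_right]
  nlinarith

/-- For a differentiable convex `f : ℝ^d → ℝ` and points
`x 0, …, x d` whose convex hull contains the origin in its interior, the vertices
`v i` (defined by `v i · x j = ∇f(x j) · x j` for `j ≠ i`) satisfy
`v i · x k ≤ ∇f(x k) · x k` for every `k`; in particular each `v i` belongs to the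
set of feasible gradients `A`. -/
theorem statement2 (d : ℕ)
    (f : EuclideanSpace ℝ (Fin d) → ℝ)
    (hf : ConvexOn ℝ Set.univ f) (hdf : Differentiable ℝ f)
    (x : Fin (d + 1) → EuclideanSpace ℝ (Fin d))
    (hx : (0 : EuclideanSpace ℝ (Fin d)) ∈ interior (convexHull ℝ (Set.range x)))
    (v : Fin (d + 1) → EuclideanSpace ℝ (Fin d))
    (hv : ∀ i j, j ≠ i → (inner ℝ (v i) (x j) : ℝ) = inner ℝ (gradient f (x j)) (x j)) :
    ∀ i, v i ∈ {w : EuclideanSpace ℝ (Fin d) |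
      ∀ k, (inner ℝ w (x k) : ℝ) ≤ inner ℝ (gradient f (x k)) (x k)} := by
  intro i k
  rcases eq_or_ne k i with rfl | hki
  · obtain ⟨w, hw, hwk, hwx⟩ :=
      exists_nonneg_sum_smul_eq_zero_of_zero_mem_interior_convexHull hx k
    refine inner_le_of_sum_smul_eq_zero hw hwx hwk (g := gradient f 0) (fun j => ?_) (hv k)
    simpa using hf.inner_gradient_le_inner_gradient hdf 0 (x j)
  · exact (hv i k hki).le
end

section
/- Let f*: ℝ^d → ℝ be a differentiable convex function and x_0, …, x_d ∈ ℝ^d be d+1 points such that the origin 0 lies in the interior of conv{x_0,…,x_d}. Let g: ℝ^d → ℝ be a differentiable convex function with ∇g(x_i) = ∇f*(x_i) for all i = 0,…,d. Then the pointwise generalization gap of the gradient at the origin is bounded by the diameter of the set of feasible gradients: ‖∇f*(0) − ∇g(0)‖₂ ≤ diam(A), where A = {v ∈ ℝ^d : v · x_i ≤ ∇f*(x_i) · x_i for all i} and diam(A) = sup{‖v − w‖₂ : v, w ∈ A}. -/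
/-!
Both `∇f 0` and `∇g 0` lie in `A`: the gradient `∇h` of a convex function is monotone, so
`⟪∇h 0, x i⟫ ≤ ⟪∇h (x i), x i⟫` for `h = f, g`, and `∇g (x i) = ∇f (x i)`. The set `A` is bounded
because a ball `closedBall 0 r` lies in the convex hull of the `x i`, so the inner products of any
`w ∈ A` with that ball are bounded by `max_i ⟪∇f (x i), x i⟫`, which forces `r * ‖w‖` below it.
-/

open Metric Set
open scoped RealInnerProductSpace

section Subgradient

variable {E : Type*} [NormedAddCommGroup E] [NormedSpace ℝ E] {s : Set E} {f : E → ℝ}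
  {f' : E →L[ℝ] ℝ} {y z : E}

theorem ConvexOn.fderiv_sub_le (hf : ConvexOn ℝ s f) (hy : y ∈ s) (hz : z ∈ s)
    (hf' : HasFDerivAt f f' y) : f' (z - y) ≤ f z - f y := by
  have hline : ConvexOn ℝ (AffineMap.lineMap (k := ℝ) y z ⁻¹' s)
      (f ∘ AffineMap.lineMap (k := ℝ) y z) :=
    hf.comp_affineMap _
  have hderiv : HasDerivAt (f ∘ AffineMap.lineMap (k := ℝ) y z) (f' (z - y)) 0 := by
    refine HasFDerivAt.comp_hasDerivAt (0 : ℝ) ?_ AffineMap.hasDerivAt_lineMap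
    simpa using hf'
  simpa [slope_def_field] using
    hline.le_slope_of_hasDerivAt (x := 0) (y := 1) (by simpa using hy) (by simpa using hz)
      one_pos hderiv

end Subgradient

section Gradient

variable {E : Type*} [NormedAddCommGroup E] [InnerProductSpace ℝ E] [CompleteSpace E]
  {s : Set E} {f : E → ℝ} {y z : E}

theorem ConvexOn.inner_gradient_sub_le (hf : ConvexOn ℝ s f) (hy : y ∈ s) (hz : z ∈ s)
    (hdf : DifferentiableAt ℝ f y) : ⟪gradient f y, z - y⟫ ≤ f z - f y := by
  simpa using hf.fderiv_sub_le hy hz hdf.hasGradientAt.hasFDerivAt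

theorem ConvexOn.inner_gradient_le_inner_gradient_s5 (hf : ConvexOn ℝ s f) (hy : y ∈ s)
    (hz : z ∈ s) (hdy : DifferentiableAt ℝ f y) (hdz : DifferentiableAt ℝ f z) :
    ⟪gradient f y, z - y⟫ ≤ ⟪gradient f z, z - y⟫ := by
  have hyz := hf.inner_gradient_sub_le hy hz hdy
  have hzy := hf.inner_gradient_sub_le hz hy hdz
  rw [← neg_sub z y, inner_neg_right] at hzy
  linarith

end Gradient

section Polar

variable {E : Type*} [NormedAddCommGroup E] [InnerProductSpace ℝ E]

/-- The half-space `{u | ⟪w, u⟫ ≤ M}` contains the ball; evaluate at its point `(r / ‖w‖) • w`. -/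
theorem mul_norm_le_of_inner_le_of_closedBall_subset {S : Set E} {r M : ℝ} {w : E} (hr : 0 < r)
    (hball : closedBall 0 r ⊆ convexHull ℝ S) (hw : ∀ u ∈ S, ⟪w, u⟫ ≤ M) :
    r * ‖w‖ ≤ M := by
  have hhull : convexHull ℝ S ⊆ {u | ⟪w, u⟫ ≤ M} :=
    convexHull_min hw (convex_halfSpace_le (innerₗ E w).isLinear M)
  have hle : ∀ u ∈ closedBall (0 : E) r, ⟪w, u⟫ ≤ M := fun u hu => hhull (hball hu)
  rcases eq_or_ne w 0 with rfl | hw0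
  · simpa using hle 0 (mem_closedBall_self hr.le)
  · have hnorm : 0 < ‖w‖ := norm_pos_iff.mpr hw0
    have hmem : (r / ‖w‖) • w ∈ closedBall (0 : E) r := by
      rw [mem_closedBall_zero_iff, norm_smul, Real.norm_of_nonneg (by positivity),
        div_mul_cancel₀ r hnorm.ne']
    calc r * ‖w‖ = ⟪w, (r / ‖w‖) • w⟫ := by
          rw [real_inner_smul_right, real_inner_self_eq_norm_sq]
          field_simp
      _ ≤ M := hle _ hmem

theorem isBounded_setOf_forall_inner_le {ι : Type*} [Finite ι] (x : ι → E) (b : ι → ℝ)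
    (hx : (0 : E) ∈ interior (convexHull ℝ (range x))) :
    Bornology.IsBounded {w : E | ∀ i, ⟪w, x i⟫ ≤ b i} := by
  obtain ⟨r, hr, hball⟩ := nhds_basis_closedBall.mem_iff.mp (mem_interior_iff_mem_nhds.mp hx)
  obtain ⟨M, hM⟩ := Finite.bddAbove_range b
  refine isBounded_closedBall (x := 0) (r := M / r) |>.subset fun w hw => ?_
  rw [mem_closedBall_zero_iff, le_div_iff₀' hr]
  refine mul_norm_le_of_inner_le_of_closedBall_subset hr hball ?_
  rintro _ ⟨i, rfl⟩
  exact (hw i).trans (hM (mem_range_self i))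

end Polar

/-- If `g : ℝ^d → ℝ` is differentiable and convex with
`∇g(x i) = ∇f(x i)` at all sample points `x i` (whose convex hull contains the
origin in its interior), then the pointwise generalization gap of the gradient at
the origin is bounded by the diameter of the set of feasible gradients:
`‖∇f(0) − ∇g(0)‖ ≤ diam A` with `A = {v | ∀ i, v · x i ≤ ∇f(x i) · x i}`. -/
theorem statement5 (d : ℕ)
    (f : EuclideanSpace ℝ (Fin d) → ℝ)
    (hf : ConvexOn ℝ Set.univ f) (hdf : Differentiable ℝ f)
    (x : Fin (d + 1) → EuclideanSpace ℝ (Fin d))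
    (hx : (0 : EuclideanSpace ℝ (Fin d)) ∈ interior (convexHull ℝ (Set.range x)))
    (g : EuclideanSpace ℝ (Fin d) → ℝ)
    (hg : ConvexOn ℝ Set.univ g) (hdg : Differentiable ℝ g)
    (hint : ∀ i, gradient g (x i) = gradient f (x i)) :
    ‖gradient f 0 - gradient g 0‖ ≤
      Metric.diam {w : EuclideanSpace ℝ (Fin d) |
        ∀ k, (inner ℝ w (x k) : ℝ) ≤ inner ℝ (gradient f (x k)) (x k)} := by
  have hf_mem k : ⟪gradient f 0, x k⟫ ≤ ⟪gradient f (x k), x k⟫ := by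
    simpa using hf.inner_gradient_le_inner_gradient_s5 (mem_univ 0) (mem_univ (x k)) (hdf 0) (hdf _)
  have hg_mem k : ⟪gradient g 0, x k⟫ ≤ ⟪gradient f (x k), x k⟫ := by
    simpa [hint] using
      hg.inner_gradient_le_inner_gradient_s5 (mem_univ 0) (mem_univ (x k)) (hdg 0) (hdg _)
  rw [← dist_eq_norm]
  exact dist_le_diam_of_mem (isBounded_setOf_forall_inner_le x _ hx) hf_mem hg_mem
end

section
/- Let f*: ℝ^d → ℝ be a differentiable convex function and x_0, …, x_d ∈ ℝ^d be d+1 points with ‖x_i‖₂ = 1 for all i, such that the origin 0 lies in the interior of conv{x_0,…,x_d}. For each i let X_i be the d×d matrix whose rows are the x_j with j ≠ i, and let v_i be the unique point satisfying v_i · x_j = ∇f*(x_j) · x_j for all j ≠ i. Then for all i, j the distance between vertices satisfies ‖v_i − v_j‖₂ ≤ (‖X_i^{-1}‖ + ‖X_j^{-1}‖) · C, where C = max_{k,l = 0,…,d} ‖∇f*(x_k) − ∇f*(x_l)‖₂ and ‖X_i^{-1}‖ denotes the operator norm of X_i^{-1} as a linear map from (ℝ^d, ‖·‖_∞) to (ℝ^d,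 ‖·‖₂). -/
/-!
Both vertices are compared with the single point `g = ∇f(x j)`. For `k ≠ l`,
`⟪x k, v l - g⟫ = ⟪∇f(x k) - g, x k⟫`, which is at most `C` in absolute value since
`‖x k‖ = 1`; so the sup-norm coordinates of `X l (v l - g)` are bounded by `C`, and
`‖v l - g‖ ≤ ‖X l⁻¹‖ * C`. The triangle inequality through `g` finishes.
-/

open Finset

section

variable {κ : Type*} [Fintype κ] {F : Type*} [NormedAddCommGroup F] [NormedSpace ℝ F]

theorem ContinuousLinearEquiv.norm_le_opNorm_mul_of_abs_symm_le
    (e : (κ → ℝ) ≃L[ℝ] F) {a : F} {C : ℝ} (hC : 0 ≤ C) (h : ∀ k, |e.symm a k| ≤ C) :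
    ‖a‖ ≤ ‖(e : (κ → ℝ) →L[ℝ] F)‖ * C :=
  calc ‖a‖ = ‖(e : (κ → ℝ) →L[ℝ] F) (e.symm a)‖ := by simp
    _ ≤ ‖(e : (κ → ℝ) →L[ℝ] F)‖ * ‖e.symm a‖ := ContinuousLinearMap.le_opNorm _ _
    _ ≤ ‖(e : (κ → ℝ) →L[ℝ] F)‖ * C :=
        mul_le_mul_of_nonneg_left ((pi_norm_le_iff_of_nonneg hC).mpr h) (norm_nonneg _)

end

section

variable {E : Type*} [NormedAddCommGroup E] [InnerProductSpace ℝ E]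

theorem abs_inner_sub_le_norm_sub_of_inner_eq {u v w g : E} (hu : ‖u‖ = 1)
    (hv : (inner ℝ v u : ℝ) = inner ℝ w u) :
    |(inner ℝ u (v - g) : ℝ)| ≤ ‖w - g‖ :=
  calc |(inner ℝ u (v - g) : ℝ)| = |(inner ℝ (w - g) u : ℝ)| := by
        rw [real_inner_comm, inner_sub_left, inner_sub_left, hv]
    _ ≤ ‖w - g‖ * ‖u‖ := abs_real_inner_le_norm _ _
    _ = ‖w - g‖ := by rw [hu, mul_one]

theorem norm_sub_le_opNorm_mul_of_inner_eq {κ : Type*} [Fintype κ]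
    (e : (κ → ℝ) ≃L[ℝ] E) (x : κ → E) (he : ∀ w k, e.symm w k = (inner ℝ (x k) w : ℝ))
    (hx : ∀ k, ‖x k‖ = 1) (G : κ → E) {v : E}
    (hv : ∀ k, (inner ℝ v (x k) : ℝ) = inner ℝ (G k) (x k))
    {g : E} {C : ℝ} (hC : 0 ≤ C) (hG : ∀ k, ‖G k - g‖ ≤ C) :
    ‖v - g‖ ≤ ‖(e : (κ → ℝ) →L[ℝ] E)‖ * C :=
  e.norm_le_opNorm_mul_of_abs_symm_le hC fun k => by
    rw [he]
    exact (abs_inner_sub_le_norm_sub_of_inner_eq (hx k) (hv k)).trans (hG k)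

end

theorem statement7_general (d : ℕ)
    (f : EuclideanSpace ℝ (Fin d) → ℝ)
    (x : Fin (d + 1) → EuclideanSpace ℝ (Fin d))
    (hnorm : ∀ i, ‖x i‖ = 1)
    (i j : Fin (d + 1))
    (ei : ({k : Fin (d + 1) // k ≠ i} → ℝ) ≃L[ℝ] EuclideanSpace ℝ (Fin d))
    (hei : ∀ (w : EuclideanSpace ℝ (Fin d)) (k : {k : Fin (d + 1) // k ≠ i}),
      ei.symm w k = (inner ℝ (x (k : Fin (d + 1))) w : ℝ))
    (ej : ({k : Fin (d + 1) // k ≠ j} → ℝ) ≃L[ℝ] EuclideanSpace ℝ (Fin d))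
    (hej : ∀ (w : EuclideanSpace ℝ (Fin d)) (k : {k : Fin (d + 1) // k ≠ j}),
      ej.symm w k = (inner ℝ (x (k : Fin (d + 1))) w : ℝ))
    (v : Fin (d + 1) → EuclideanSpace ℝ (Fin d))
    (hv : ∀ l k, k ≠ l →
      (inner ℝ (v l) (x k) : ℝ) = inner ℝ (gradient f (x k)) (x k)) :
    ‖v i - v j‖ ≤
      (‖(ei : ({k : Fin (d + 1) // k ≠ i} → ℝ) →L[ℝ] EuclideanSpace ℝ (Fin d))‖ +
       ‖(ej : ({k : Fin (d + 1) // k ≠ j} → ℝ) →L[ℝ] EuclideanSpace ℝ (Fin d))‖) *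
        Finset.univ.sup' Finset.univ_nonempty
          (fun p : Fin (d + 1) × Fin (d + 1) =>
            ‖gradient f (x p.1) - gradient f (x p.2)‖) := by
  set C := univ.sup' univ_nonempty
    fun p : Fin (d + 1) × Fin (d + 1) => ‖gradient f (x p.1) - gradient f (x p.2)‖
  set g := gradient f (x j)
  have hG : ∀ k, ‖gradient f (x k) - g‖ ≤ C := fun k =>
    le_sup' (fun p : Fin (d + 1) × Fin (d + 1) => ‖gradient f (x p.1) - gradient f (x p.2)‖)
      (mem_univ (k, j))
  have hC : 0 ≤ C := (norm_nonneg _).trans (hG j)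
  have hvi := norm_sub_le_opNorm_mul_of_inner_eq ei _ hei (fun k => hnorm k) _
    (fun k => hv i k k.2) hC (fun k => hG k)
  have hvj := norm_sub_le_opNorm_mul_of_inner_eq ej _ hej (fun k => hnorm k) _
    (fun k => hv j k k.2) hC (fun k => hG k)
  calc ‖v i - v j‖ ≤ ‖v i - g‖ + ‖v j - g‖ := by
        rw [norm_sub_rev (v j)]; exact norm_sub_le_norm_sub_add_norm_sub _ _ _
    _ ≤ _ := by rw [add_mul]; exact add_le_add hvi hvj

/-- Let `f : ℝ^d → ℝ` be differentiable and convex, and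
`x 0, …, x d` unit vectors whose convex hull contains the origin in its interior.
For each index `i`, let `X i : w ↦ (x k · w)_{k ≠ i}` be the matrix with rows
`x k`, `k ≠ i`, with inverse `eᵢ` regarded as a map from `(ℝ^d, ‖·‖_∞)` (plain pi
type with sup norm) to `(ℝ^d, ‖·‖₂)` (Euclidean space), and let `v i` be the
vertex satisfying `v i · x k = ∇f(x k) · x k` for all `k ≠ i`. Then for all
`i, j`: `‖v i − v j‖₂ ≤ (‖X i⁻¹‖ + ‖X j⁻¹‖) * C`, where
`C = max_{k,l} ‖∇f(x k) − ∇f(x l)‖₂`. -/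
theorem statement7 (d : ℕ)
    (f : EuclideanSpace ℝ (Fin d) → ℝ)
    (hf : ConvexOn ℝ Set.univ f) (hdf : Differentiable ℝ f)
    (x : Fin (d + 1) → EuclideanSpace ℝ (Fin d))
    (hnorm : ∀ i, ‖x i‖ = 1)
    (hx : (0 : EuclideanSpace ℝ (Fin d)) ∈ interior (convexHull ℝ (Set.range x)))
    (i j : Fin (d + 1))
    (ei : ({k : Fin (d + 1) // k ≠ i} → ℝ) ≃L[ℝ] EuclideanSpace ℝ (Fin d))
    (hei : ∀ (w : EuclideanSpace ℝ (Fin d)) (k : {k : Fin (d + 1) // k ≠ i}),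
      ei.symm w k = (inner ℝ (x (k : Fin (d + 1))) w : ℝ))
    (ej : ({k : Fin (d + 1) // k ≠ j} → ℝ) ≃L[ℝ] EuclideanSpace ℝ (Fin d))
    (hej : ∀ (w : EuclideanSpace ℝ (Fin d)) (k : {k : Fin (d + 1) // k ≠ j}),
      ej.symm w k = (inner ℝ (x (k : Fin (d + 1))) w : ℝ))
    (v : Fin (d + 1) → EuclideanSpace ℝ (Fin d))
    (hv : ∀ l k, k ≠ l →
      (inner ℝ (v l) (x k) : ℝ) = inner ℝ (gradient f (x k)) (x k)) :
    ‖v i - v j‖ ≤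
      (‖(ei : ({k : Fin (d + 1) // k ≠ i} → ℝ) →L[ℝ] EuclideanSpace ℝ (Fin d))‖ +
       ‖(ej : ({k : Fin (d + 1) // k ≠ j} → ℝ) →L[ℝ] EuclideanSpace ℝ (Fin d))‖) *
        Finset.univ.sup' Finset.univ_nonempty
          (fun p : Fin (d + 1) × Fin (d + 1) =>
            ‖gradient f (x p.1) - gradient f (x p.2)‖) :=
  statement7_general d f x hnorm i j ei hei ej hej v hv
end

section
/- Let g: [-1,1] → ℝ be integrable with g ≥ 0 almost everywhere and moments u_i = ∫_{-1}^{1} v^i g(v) dv for i = 0,1,2,3, normalized so that u_0 = 1. If −1 < u_1 < 1, then the third-order realizability conditions hold: −u_2 + (u_1 + u_2)²/(1 + u_1) ≤ u_3 ≤ u_2 − (u_1 − u_2)²/(1 − u_1). -/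
open MeasureTheory

lemma key18 (g : ℝ → ℝ)
    (hgi : IntervalIntegrable g volume (-1) 1)
    (hg0 : ∀ᵐ v ∂volume, v ∈ Set.Icc (-1 : ℝ) 1 → 0 ≤ g v)
    (c0 c1 c2 c3 : ℝ)
    (hpos : ∀ v ∈ Set.Icc (-1 : ℝ) 1, 0 ≤ c0 + c1 * v + c2 * v ^ 2 + c3 * v ^ 3) :
    0 ≤ c0 * (∫ v in (-1 : ℝ)..1, v ^ 0 * g v)
      + c1 * (∫ v in (-1 : ℝ)..1, v ^ 1 * g v)
      + c2 * (∫ v in (-1 : ℝ)..1, v ^ 2 * g v)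
      + c3 * (∫ v in (-1 : ℝ)..1, v ^ 3 * g v) := by
  have hi : ∀ i : ℕ, IntervalIntegrable (fun v => v ^ i * g v) volume (-1) 1 := by
    intro i
    exact hgi.continuousOn_mul (continuous_pow i).continuousOn
  have hsum :
      c0 * (∫ v in (-1 : ℝ)..1, v ^ 0 * g v)
      + c1 * (∫ v in (-1 : ℝ)..1, v ^ 1 * g v)
      + c2 * (∫ v in (-1 : ℝ)..1, v ^ 2 * g v)
      + c3 * (∫ v in (-1 : ℝ)..1, v ^ 3 * g v)
      = ∫ v in (-1 : ℝ)..1, (c0 + c1 * v + c2 * v ^ 2 + c3 * v ^ 3) * g v := by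
    rw [← intervalIntegral.integral_const_mul, ← intervalIntegral.integral_const_mul,
      ← intervalIntegral.integral_const_mul, ← intervalIntegral.integral_const_mul,
      ← intervalIntegral.integral_add ((hi 0).const_mul c0) ((hi 1).const_mul c1),
      ← intervalIntegral.integral_add (((hi 0).const_mul c0).add ((hi 1).const_mul c1))
        ((hi 2).const_mul c2),
      ← intervalIntegral.integral_add
        ((((hi 0).const_mul c0).add ((hi 1).const_mul c1)).add ((hi 2).const_mul c2))
        ((hi 3).const_mul c3)]
    apply intervalIntegral.integral_congr
    intro v _
    ring
  rw [hsum]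
  apply intervalIntegral.integral_nonneg_of_ae_restrict (by norm_num : (-1:ℝ) ≤ 1)
  refine (ae_restrict_iff' measurableSet_Icc).mpr ?_
  filter_upwards [hg0] with v hv hvI
  exact mul_nonneg (hpos v hvI) (hv hvI)

/-- For an integrable, a.e. nonnegative density `g` on `[-1,1]`
with moments `u_i = ∫_{-1}^1 v^i g(v) dv`, normalized so that `u₀ = 1`, and with
`−1 < u₁ < 1`, the third-order realizability conditions hold:
`−u₂ + (u₁ + u₂)²/(1 + u₁) ≤ u₃ ≤ u₂ − (u₁ − u₂)²/(1 − u₁)`. -/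
theorem statement18 (g : ℝ → ℝ)
    (hgi : IntervalIntegrable g volume (-1) 1)
    (hg0 : ∀ᵐ v ∂volume, v ∈ Set.Icc (-1 : ℝ) 1 → 0 ≤ g v)
    (u : ℕ → ℝ)
    (hu : ∀ i, u i = ∫ v in (-1 : ℝ)..1, v ^ i * g v)
    (hu0 : u 0 = 1)
    (hu1l : -1 < u 1) (hu1r : u 1 < 1) :
    -u 2 + (u 1 + u 2) ^ 2 / (1 + u 1) ≤ u 3 ∧
    u 3 ≤ u 2 - (u 1 - u 2) ^ 2 / (1 - u 1) := by
  have hs : (0:ℝ) < 1 - u 1 := by linarith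
  have ht : (0:ℝ) < 1 + u 1 := by linarith
  set s := 1 - u 1 with hs_def
  set t := 1 + u 1 with ht_def
  set m := u 1 - u 2 with hm_def
  set n := u 1 + u 2 with hn_def
  -- upper bound: (1 - v) * (s*v - m)^2 ≥ 0
  have hup := key18 g hgi hg0 (m^2) (-2*s*m - m^2) (s^2 + 2*s*m) (-s^2) (by
    intro v hv
    have h1 : (0:ℝ) ≤ 1 - v := by linarith [hv.2]
    nlinarith [sq_nonneg (s*v - m), mul_nonneg h1 (sq_nonneg (s*v - m))])
  -- lower bound: (1 + v) * (t*v - n)^2 ≥ 0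
  have hlo := key18 g hgi hg0 (n^2) (n^2 - 2*t*n) (t^2 - 2*t*n) (t^2) (by
    intro v hv
    have h1 : (0:ℝ) ≤ 1 + v := by linarith [hv.1]
    nlinarith [sq_nonneg (t*v - n), mul_nonneg h1 (sq_nonneg (t*v - n))])
  rw [← hu 0, ← hu 1, ← hu 2, ← hu 3] at hup hlo
  rw [hu0] at hup hlo
  simp only [hs_def, ht_def, hm_def, hn_def] at hup hlo
  constructor
  · have h : n ^ 2 / t ≤ u 3 + u 2 := by
      rw [div_le_iff₀ ht, hn_def, ht_def]
      nlinarith [hlo, ht_def ▸ ht]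
    linarith
  · have h : m ^ 2 / s ≤ u 2 - u 3 := by
      rw [div_le_iff₀ hs, hm_def, hs_def]
      nlinarith [hup, hs_def ▸ hs]
    linarith
end

section
/- Let g: [-1,1] → ℝ be integrable with g ≥ 0 almost everywhere and moments u_i = ∫_{-1}^{1} v^i g(v) dv for i = 0,…,4, normalized so that u_0 = 1. If u_1² < u_2 < 1, then the fourth-order realizability conditions hold: (u_2³ + u_3² − 2 u_1 u_2 u_3)/(u_2 − u_1²) ≤ u_4 ≤ u_2 − (u_1 − u_3)²/(1 − u_2). -/
open MeasureTheory Set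

/-! The realizability conditions express the nonnegativity of the moment functional
`L p = ∫ p g` on two quartics that are nonnegative on `[-1, 1]`: the square `(v² - α v - β)²`,
where `α v + β` is the orthogonal projection of `v²` onto the affine functions in `L²(g)`, and
`(1 - v²) (v + c)²` with `c = (u₃ - u₁) / (1 - u₂)`. -/

def RieszPositiveOn (S : Set ℝ) (n : ℕ) (u : ℕ → ℝ) : Prop :=
  ∀ c : Fin (n + 1) → ℝ, (∀ v ∈ S, 0 ≤ ∑ i, c i * v ^ (i : ℕ)) → 0 ≤ ∑ i, c i * u i

theorem rieszPositiveOn_moments {a b : ℝ} {g : ℝ → ℝ} (hab : a ≤ b)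
    (hgi : IntervalIntegrable g volume a b) (hg0 : ∀ᵐ v ∂volume, v ∈ Icc a b → 0 ≤ g v)
    (n : ℕ) : RieszPositiveOn (Icc a b) n (fun i => ∫ v in a..b, v ^ i * g v) := by
  intro c hc
  have hint : ∀ i : Fin (n + 1),
      IntervalIntegrable (fun v => c i * (v ^ (i : ℕ) * g v)) volume a b :=
    fun i => (hgi.continuousOn_mul (continuous_pow _).continuousOn).const_mul _
  simp only [← intervalIntegral.integral_const_mul]
  rw [← intervalIntegral.integral_finsetSum fun i _ => hint i]
  refine intervalIntegral.integral_nonneg_of_ae_restrict hab ?_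
  rw [Filter.EventuallyLE, ae_restrict_iff' measurableSet_Icc]
  filter_upwards [hg0] with v hv hvI
  simp only [Pi.zero_apply, ← mul_assoc, ← Finset.sum_mul]
  exact mul_nonneg (hc v hvI) (hv hvI)

namespace RieszPositiveOn

variable {S : Set ℝ} {u : ℕ → ℝ}

theorem apply_quartic (h : RieszPositiveOn S 4 u) (c₀ c₁ c₂ c₃ c₄ : ℝ)
    (hp : ∀ v ∈ S, 0 ≤ c₀ + c₁ * v + c₂ * v ^ 2 + c₃ * v ^ 3 + c₄ * v ^ 4) :
    0 ≤ c₀ * u 0 + c₁ * u 1 + c₂ * u 2 + c₃ * u 3 + c₄ * u 4 := by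
  simpa [Fin.sum_univ_five] using h ![c₀, c₁, c₂, c₃, c₄] (by simpa [Fin.sum_univ_five] using hp)

theorem hankel_lower_bound (h : RieszPositiveOn S 4 u) (hu0 : u 0 = 1)
    (hu : u 1 ^ 2 < u 2) :
    (u 2 ^ 3 + u 3 ^ 2 - 2 * u 1 * u 2 * u 3) / (u 2 - u 1 ^ 2) ≤ u 4 := by
  have hD : 0 < u 2 - u 1 ^ 2 := by linarith
  set α := (u 3 - u 1 * u 2) / (u 2 - u 1 ^ 2)
  set β := (u 2 ^ 2 - u 1 * u 3) / (u 2 - u 1 ^ 2)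
  have key := h.apply_quartic (β ^ 2) (2 * α * β) (α ^ 2 - 2 * β) (-2 * α) 1 fun v _ => by
    nlinarith [sq_nonneg (v ^ 2 - α * v - β)]
  have : β ^ 2 * u 0 + 2 * α * β * u 1 + (α ^ 2 - 2 * β) * u 2 + -2 * α * u 3 + 1 * u 4 =
      u 4 - (u 2 ^ 3 + u 3 ^ 2 - 2 * u 1 * u 2 * u 3) / (u 2 - u 1 ^ 2) := by
    simp only [α, β, hu0]
    field_simp
    ring
  linarith

theorem hankel_upper_bound (h : RieszPositiveOn S 4 u) (hS : S ⊆ Icc (-1) 1) (hu0 : u 0 = 1)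
    (hu : u 2 < 1) :
    u 4 ≤ u 2 - (u 1 - u 3) ^ 2 / (1 - u 2) := by
  have hE : 0 < 1 - u 2 := by linarith
  set c := (u 3 - u 1) / (1 - u 2)
  have key := h.apply_quartic (c ^ 2) (2 * c) (1 - c ^ 2) (-2 * c) (-1) fun v hv => by
    have hv1 : v ^ 2 ≤ 1 := by nlinarith [(hS hv).1, (hS hv).2]
    nlinarith [mul_nonneg (sub_nonneg.2 hv1) (sq_nonneg (v + c))]
  have : c ^ 2 * u 0 + 2 * c * u 1 + (1 - c ^ 2) * u 2 + -2 * c * u 3 + -1 * u 4 =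
      u 2 - (u 1 - u 3) ^ 2 / (1 - u 2) - u 4 := by
    simp only [c, hu0]
    field_simp
    ring
  linarith

end RieszPositiveOn

/-- For an integrable, a.e. nonnegative density `g` on `[-1,1]`
with moments `u_i = ∫_{-1}^1 v^i g(v) dv`, normalized so that `u₀ = 1`, and with
`u₁² < u₂ < 1`, the fourth-order realizability conditions hold:
`(u₂³ + u₃² − 2 u₁ u₂ u₃)/(u₂ − u₁²) ≤ u₄ ≤ u₂ − (u₁ − u₃)²/(1 − u₂)`. -/
theorem statement19 (g : ℝ → ℝ)
    (hgi : IntervalIntegrable g volume (-1) 1)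
    (hg0 : ∀ᵐ v ∂volume, v ∈ Set.Icc (-1 : ℝ) 1 → 0 ≤ g v)
    (u : ℕ → ℝ)
    (hu : ∀ i, u i = ∫ v in (-1 : ℝ)..1, v ^ i * g v)
    (hu0 : u 0 = 1)
    (hu2l : u 1 ^ 2 < u 2) (hu2r : u 2 < 1) :
    (u 2 ^ 3 + u 3 ^ 2 - 2 * u 1 * u 2 * u 3) / (u 2 - u 1 ^ 2) ≤ u 4 ∧
    u 4 ≤ u 2 - (u 1 - u 3) ^ 2 / (1 - u 2) := by
  obtain rfl : u = fun i => ∫ v in (-1 : ℝ)..1, v ^ i * g v := funext hu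
  have h := rieszPositiveOn_moments (by norm_num) hgi hg0 4
  exact ⟨h.hankel_lower_bound hu0 hu2l, h.hankel_upper_bound subset_rfl hu0 hu2r⟩
end
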